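/- Let n, m ≥ 1 and 0 ≤ t < T. Let A ∈ L¹(t,T;ℝ^{n×n}), B ∈ L²(t,T;ℝ^{n×m}), C ∈ L²(t,T;ℝ^{n×n}), D ∈ L^∞(t,T;ℝ^{n×m}), Q ∈ L¹(t,T;𝕊ⁿ), S ∈ L²(t,T;ℝ^{m×n}), R ∈ L^∞(t,T;𝕊ᵐ), and G ∈ 𝕊ⁿ. Suppose P : [t,T] → 𝕊ⁿ is continuous and solves the Riccati integral equation P(s) = G + ∫ₛᵀ [PA + AᵀP + CᵀPC + Q − MᵀR̂†M] dr for all s ∈ [t,T], where M(s) = B(s)ᵀP(s) + D(s)ᵀP(s)C(s) + S(s), R̂(s) = R(s) + D(s)ᵀP(s)D(s), and R̂(s)† is the Moore–Penrose pseudoinverse of R̂(s); assume the range condition R̂R̂†M = M holds a.e. on [t,T] and that R̂†M ∈ L²(t,T;ℝ^{m×n}). Let θ ∈ L²(t,T;ℝ^{m×n}) be arbitrary and define Θ(s) = −R̂(s)†M(s) + (I − R̂(s)†R̂(s))θ(s). Then Θ ∈ L²(t,T;ℝ^{m×n}), the stationarity constraint BᵀP + DᵀPC + S + (R + DᵀPD)Θ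 = 0 holds a.e. on [t,T], and P satisfies the linear equation P(s) = G + ∫ₛᵀ [P A + AᵀP + CᵀPC + (PB + CᵀPD + Sᵀ)Θ + Q] dr for all s ∈ [t,T]. -/

import Mathlib

open Matrix MeasureTheory

attribute [local instance] Matrix.normedAddCommGroup Matrix.normedSpace

/-!
Write `R̂ = R + DᵀPD` and `M = BᵀP + DᵀPC + S`. The first Penrose equation and the range
condition give `R̂Θ = -R̂R̂†M + (R̂ - R̂R̂†R̂)θ = -M`, which is stationarity. Transposing the range
condition (`R̂` is symmetric) gives `Mᵀ = Mᵀ(R̂†)ᵀR̂`, so `Mᵀ(I - R̂†R̂) = 0` and `MᵀΘ = -MᵀR̂†M`: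
the Riccati and Lyapunov integrands agree a.e. Finally `I - R̂†R̂` is an orthogonal projection by
the other two Penrose equations, so its entries are bounded by `1` and `Θ` is in `L²`.
-/

namespace Matrix

variable {ι k l n : Type*} [Fintype ι] [Fintype l]

def IsMoorePenroseInverse {𝕜 : Type*} [CommRing 𝕜] [Fintype n] (M : Matrix l n 𝕜)
    (X : Matrix n l 𝕜) : Prop :=
  M * X * M = M ∧ X * M * X = X ∧ (M * X)ᵀ = M * X ∧ (X * M)ᵀ = X * M

theorem norm_mul_le_card_mul {α : Type*} [NonUnitalNormedRing α] [Fintype k] [Fintype n]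
    (A : Matrix k l α) (B : Matrix l n α) : ‖A * B‖ ≤ Fintype.card l * ‖A‖ * ‖B‖ := by
  rw [norm_le_iff (by positivity)]
  intro i j
  calc ‖(A * B) i j‖ ≤ ∑ c, ‖A i c‖ * ‖B c j‖ :=
        (norm_sum_le _ _).trans (Finset.sum_le_sum fun c _ => norm_mul_le _ _)
    _ ≤ ∑ _c : l, ‖A‖ * ‖B‖ := by
        gcongr with c
        exacts [norm_entry_le_entrywise_sup_norm A, norm_entry_le_entrywise_sup_norm B]
    _ = Fintype.card l * ‖A‖ * ‖B‖ := by simp [mul_assoc]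

theorem norm_le_one_of_transpose_eq_of_mul_self_eq {P : Matrix ι ι ℝ} (hsymm : Pᵀ = P)
    (hidem : P * P = P) : ‖P‖ ≤ 1 := by
  have gram : ∀ i j, P i j = ∑ c, P c i * P c j := fun i j => by
    simpa [mul_apply] using (congrFun (congrFun (show Pᵀ * P = P by rw [hsymm, hidem]) i) j).symm
  have diag : ∀ i, P i i = ∑ c, P c i ^ 2 := fun i => by simpa [sq] using gram i i
  have diag_mem : ∀ i, 0 ≤ P i i ∧ P i i ≤ 1 := fun i => by
    have : P i i ^ 2 ≤ P i i := diag i ▸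
      Finset.single_le_sum (f := fun c => P c i ^ 2) (fun c _ => sq_nonneg _) (Finset.mem_univ i)
    exact ⟨diag i ▸ by positivity, by nlinarith⟩
  rw [norm_le_iff zero_le_one]
  intro i j
  have cauchy_schwarz : P i j ^ 2 ≤ P i i * P j j := by
    rw [gram i j, diag i, diag j]
    exact Finset.sum_mul_sq_le_sq_mul_sq _ _ _
  rw [Real.norm_eq_abs, ← sq_le_one_iff_abs_le_one]
  nlinarith [diag_mem i, diag_mem j]

theorem IsMoorePenroseInverse.norm_one_sub_mul_le_one [DecidableEq l] {M : Matrix ι l ℝ}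
    {X : Matrix l ι ℝ} (h : IsMoorePenroseInverse M X) : ‖1 - X * M‖ ≤ 1 := by
  obtain ⟨-, hXMX, -, hXM⟩ := h
  refine norm_le_one_of_transpose_eq_of_mul_self_eq (by rw [transpose_sub, transpose_one, hXM]) ?_
  have : X * M * (X * M) = X * M := by rw [← Matrix.mul_assoc, hXMX]
  rw [sub_mul, mul_sub, mul_sub, this]
  simp

section FeedbackGain

variable {𝕜 : Type*} [CommRing 𝕜] [Fintype k] [DecidableEq k]

def feedbackGain (Rhat X : Matrix k k 𝕜) (M θ : Matrix k n 𝕜) : Matrix k n 𝕜 :=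
  -(X * M) + (1 - X * Rhat) * θ

variable {Rhat X : Matrix k k 𝕜} {M θ : Matrix k n 𝕜}

theorem add_mul_feedbackGain_eq_zero (hRhat : Rhat * X * Rhat = Rhat) (hM : Rhat * X * M = M) :
    M + Rhat * feedbackGain Rhat X M θ = 0 := by
  simp only [feedbackGain, Matrix.mul_add, Matrix.mul_neg, Matrix.mul_sub, Matrix.mul_one,
    ← Matrix.mul_assoc, hRhat, hM, sub_self, Matrix.zero_mul, add_zero, add_neg_cancel]

theorem transpose_mul_feedbackGain (hsymm : Rhatᵀ = Rhat) (hRhat : Rhat * X * Rhat = Rhat)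
    (hM : Rhat * X * M = M) : Mᵀ * feedbackGain Rhat X M θ = -(Mᵀ * X * M) := by
  have hMrow : Mᵀ = Mᵀ * Xᵀ * Rhat := by
    conv_lhs => rw [← hM]
    rw [transpose_mul, transpose_mul, hsymm, Matrix.mul_assoc]
  have hkill : Mᵀ * (1 - X * Rhat) = 0 := by
    rw [hMrow, Matrix.mul_sub, Matrix.mul_one, Matrix.mul_assoc _ Rhat, ← Matrix.mul_assoc Rhat,
      hRhat, sub_self]
  rw [feedbackGain, Matrix.mul_add, Matrix.mul_neg, ← Matrix.mul_assoc Mᵀ (1 - X * Rhat), hkill,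
    Matrix.zero_mul, add_zero, Matrix.mul_assoc]

end FeedbackGain

end Matrix

namespace MeasureTheory

variable {α k l n : Type*} [Fintype l] {m : MeasurableSpace α} {μ : Measure α}

theorem AEStronglyMeasurable.matrix_mul {f : α → Matrix k l ℝ} {g : α → Matrix l n ℝ}
    (hf : AEStronglyMeasurable f μ) (hg : AEStronglyMeasurable g μ) :
    AEStronglyMeasurable (fun x => f x * g x) μ :=
  (continuous_fst.matrix_mul continuous_snd).comp_aestronglyMeasurable (hf.prodMk hg)

theorem MemLp.matrix_mul_of_ae_norm_le [Fintype k] [Fintype n] {p : ENNReal}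
    {A : α → Matrix k l ℝ} {f : α → Matrix l n ℝ} {c : ℝ} (hf : MemLp f p μ)
    (hA : AEStronglyMeasurable A μ) (hbound : ∀ᵐ x ∂μ, ‖A x‖ ≤ c) :
    MemLp (fun x => A x * f x) p μ :=
  hf.of_le_mul (c := Fintype.card l * c) (hA.matrix_mul hf.1) <|
    hbound.mono fun x hx => (Matrix.norm_mul_le_card_mul _ _).trans (by gcongr)

theorem memLp_feedbackGain [Fintype k] [DecidableEq k] [Fintype n] {p : ENNReal}
    {Rhat X : α → Matrix k k ℝ} {M θ : α → Matrix k n ℝ}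
    (hpinv : ∀ᵐ x ∂μ, (Rhat x).IsMoorePenroseInverse (X x)) (hRhat : AEStronglyMeasurable Rhat μ)
    (hX : AEStronglyMeasurable X μ) (hXM : MemLp (fun x => X x * M x) p μ) (hθ : MemLp θ p μ) :
    MemLp (fun x => Matrix.feedbackGain (Rhat x) (X x) (M x) (θ x)) p μ :=
  hXM.neg.add <| hθ.matrix_mul_of_ae_norm_le (aestronglyMeasurable_const.sub (hX.matrix_mul hRhat))
    (hpinv.mono fun _ hx => hx.norm_one_sub_mul_le_one)

end MeasureTheory

theorem riccati_integrand_eq_lyapunov_integrand {𝕜 k n : Type*} [CommRing 𝕜] [Fintype k]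
    [DecidableEq k] [Fintype n] {P A C Q : Matrix n n 𝕜} {B D : Matrix n k 𝕜} {S : Matrix k n 𝕜}
    {R X : Matrix k k 𝕜} (θ : Matrix k n 𝕜) (hP : Pᵀ = P) (hR : Rᵀ = R)
    (hpinv : (R + Dᵀ * P * D) * X * (R + Dᵀ * P * D) = R + Dᵀ * P * D)
    (hrange : (R + Dᵀ * P * D) * X * (Bᵀ * P + Dᵀ * P * C + S) = Bᵀ * P + Dᵀ * P * C + S) :
    P * A + Aᵀ * P + Cᵀ * P * C + Q - (Bᵀ * P + Dᵀ * P * C + S)ᵀ * X * (Bᵀ * P + Dᵀ * P * C + S)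
      = P * A + Aᵀ * P + Cᵀ * P * C
        + (P * B + Cᵀ * P * D + Sᵀ) * feedbackGain (R + Dᵀ * P * D) X (Bᵀ * P + Dᵀ * P * C + S) θ
        + Q := by
  have hMt : (Bᵀ * P + Dᵀ * P * C + S)ᵀ = P * B + Cᵀ * P * D + Sᵀ := by
    simp [transpose_add, transpose_mul, hP, Matrix.mul_assoc]
  have hsymm : (R + Dᵀ * P * D)ᵀ = R + Dᵀ * P * D := by
    simp [transpose_add, transpose_mul, hP, hR, Matrix.mul_assoc]
  rw [← hMt, transpose_mul_feedbackGain hsymm hpinv hrange]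
  abel

theorem regular_riccati_solution_gives_closed_loop_gain_general
    {n m : ℕ}
    (t T : ℝ)
    (A : ℝ → Matrix (Fin n) (Fin n) ℝ) (B : ℝ → Matrix (Fin n) (Fin m) ℝ)
    (C : ℝ → Matrix (Fin n) (Fin n) ℝ) (D : ℝ → Matrix (Fin n) (Fin m) ℝ)
    (Q : ℝ → Matrix (Fin n) (Fin n) ℝ) (S : ℝ → Matrix (Fin m) (Fin n) ℝ)
    (R : ℝ → Matrix (Fin m) (Fin m) ℝ) (G : Matrix (Fin n) (Fin n) ℝ)
    -- D ∈ L^∞(t,T;ℝ^{n×m})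
    (hDmeas : AEStronglyMeasurable D (volume.restrict (Set.Icc t T)))
    -- R ∈ L^∞(t,T;𝕊ᵐ)
    (hRmeas : AEStronglyMeasurable R (volume.restrict (Set.Icc t T)))
    (hRsymm : ∀ᵐ s ∂volume.restrict (Set.Icc t T), (R s)ᵀ = R s)
    -- P continuous with symmetric values
    (P : ℝ → Matrix (Fin n) (Fin n) ℝ) (hPcont : ContinuousOn P (Set.Icc t T))
    (hPsymm : ∀ s ∈ Set.Icc t T, (P s)ᵀ = P s)
    -- R̂† : a measurable pointwise Moore–Penrose pseudoinverse of R̂ = R + DᵀPD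
    (Rdag : ℝ → Matrix (Fin m) (Fin m) ℝ)
    (hRdagmeas : AEStronglyMeasurable Rdag (volume.restrict (Set.Icc t T)))
    (hRdag : ∀ᵐ s ∂volume.restrict (Set.Icc t T),
      (R s + (D s)ᵀ * P s * D s) * Rdag s * (R s + (D s)ᵀ * P s * D s)
          = R s + (D s)ᵀ * P s * D s ∧
        Rdag s * (R s + (D s)ᵀ * P s * D s) * Rdag s = Rdag s ∧
        ((R s + (D s)ᵀ * P s * D s) * Rdag s)ᵀ = (R s + (D s)ᵀ * P s * D s) * Rdag s ∧
        (Rdag s * (R s + (D s)ᵀ * P s * D s))ᵀ = Rdag s * (R s + (D s)ᵀ * P s * D s))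
    -- the Riccati integral equation
    (hPeq : ∀ s ∈ Set.Icc t T,
      P s = G + ∫ r in s..T,
        (P r * A r + (A r)ᵀ * P r + (C r)ᵀ * P r * C r + Q r
          - ((B r)ᵀ * P r + (D r)ᵀ * P r * C r + S r)ᵀ * Rdag r
              * ((B r)ᵀ * P r + (D r)ᵀ * P r * C r + S r)))
    -- the range condition R̂R̂†M = M a.e.
    (hrange : ∀ᵐ s ∂volume.restrict (Set.Icc t T),
      (R s + (D s)ᵀ * P s * D s) * Rdag s
          * ((B s)ᵀ * P s + (D s)ᵀ * P s * C s + S s)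
        = (B s)ᵀ * P s + (D s)ᵀ * P s * C s + S s)
    -- R̂†M ∈ L²(t,T;ℝ^{m×n})
    (hL2meas : AEStronglyMeasurable
      (fun s => Rdag s * ((B s)ᵀ * P s + (D s)ᵀ * P s * C s + S s))
      (volume.restrict (Set.Icc t T)))
    (hL2 : IntegrableOn
      (fun s => ‖Rdag s * ((B s)ᵀ * P s + (D s)ᵀ * P s * C s + S s)‖ ^ 2)
      (Set.Icc t T))
    -- an arbitrary θ ∈ L² and the candidate gain Θ
    (θ : ℝ → Matrix (Fin m) (Fin n) ℝ)
    (hθmeas : AEStronglyMeasurable θ (volume.restrict (Set.Icc t T)))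
    (hθ : IntegrableOn (fun s => ‖θ s‖ ^ 2) (Set.Icc t T))
    (Θ : ℝ → Matrix (Fin m) (Fin n) ℝ)
    (hΘdef : ∀ s, Θ s = -(Rdag s * ((B s)ᵀ * P s + (D s)ᵀ * P s * C s + S s))
      + (1 - Rdag s * (R s + (D s)ᵀ * P s * D s)) * θ s) :
    -- Θ ∈ L²(t,T;ℝ^{m×n})
    (AEStronglyMeasurable Θ (volume.restrict (Set.Icc t T)) ∧
      IntegrableOn (fun s => ‖Θ s‖ ^ 2) (Set.Icc t T)) ∧
    -- the stationarity constraint a.e.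
    (∀ᵐ s ∂volume.restrict (Set.Icc t T),
      (B s)ᵀ * P s + (D s)ᵀ * P s * C s + S s
        + (R s + (D s)ᵀ * P s * D s) * Θ s = 0) ∧
    -- the Lyapunov-type linear integral equation
    (∀ s ∈ Set.Icc t T,
      P s = G + ∫ r in s..T,
        (P r * A r + (A r)ᵀ * P r + (C r)ᵀ * P r * C r
          + (P r * B r + (C r)ᵀ * P r * D r + (S r)ᵀ) * Θ r + Q r)) := by
  -- `Matrix` is a type synonym and does not inherit this instance from the Pi type
  have : TopologicalSpace.PseudoMetrizableSpace (Matrix (Fin n) (Fin n) ℝ) :=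
    inferInstanceAs (TopologicalSpace.PseudoMetrizableSpace (Fin n → Fin n → ℝ))
  have hPmeas : AEStronglyMeasurable P (volume.restrict (Set.Icc t T)) :=
    hPcont.aestronglyMeasurable measurableSet_Icc
  have hRhatmeas : AEStronglyMeasurable (fun s => R s + (D s)ᵀ * P s * D s)
      (volume.restrict (Set.Icc t T)) :=
    hRmeas.add (((continuous_id.matrix_transpose.comp_aestronglyMeasurable hDmeas).matrix_mul
      hPmeas).matrix_mul hDmeas)
  have hΘL2 : MemLp Θ 2 (volume.restrict (Set.Icc t T)) := funext hΘdef ▸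
    memLp_feedbackGain hRdag hRhatmeas hRdagmeas
      ((memLp_two_iff_integrable_sq_norm hL2meas).2 hL2)
      ((memLp_two_iff_integrable_sq_norm hθmeas).2 hθ)
  refine ⟨⟨hΘL2.1, (memLp_two_iff_integrable_sq_norm hΘL2.1).1 hΘL2⟩, ?_, ?_⟩
  · filter_upwards [hRdag, hrange] with s hpinv hs
    rw [hΘdef]
    exact add_mul_feedbackGain_eq_zero hpinv.1 hs
  · intro s hs
    rw [hPeq s hs]
    congr 1
    refine intervalIntegral.integral_congr_ae_restrict <| ae_restrict_of_ae_restrict_of_subset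
      (Set.uIoc_of_le hs.2 ▸ Set.Ioc_subset_Icc_self.trans (Set.Icc_subset_Icc_left hs.1)) ?_
    filter_upwards [hRdag, hrange, hRsymm, ae_restrict_mem measurableSet_Icc]
      with r hpinv hr hRr hrmem
    rw [hΘdef]
    exact riccati_integrand_eq_lyapunov_integrand (θ r) (hPsymm r hrmem) hRr hpinv.1 hr

/-- Deterministic core of the sufficiency part of Theorem 5.2: from a regular solution `P`
of the Riccati integral equation (range condition a.e. and `R̂†M ∈ L²`), for any
`θ ∈ L²` the candidate gain `Θ = −R̂†M + (I − R̂†R̂)θ` belongs to `L²`, satisfies the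
stationarity constraint `BᵀP + DᵀPC + S + (R + DᵀPD)Θ = 0` a.e., and `P` satisfies the
Lyapunov-type linear integral equation with this `Θ`. -/
theorem regular_riccati_solution_gives_closed_loop_gain
    {n m : ℕ} (hn : 1 ≤ n) (hm : 1 ≤ m)
    (t T : ℝ) (ht : 0 ≤ t) (htT : t < T)
    (A : ℝ → Matrix (Fin n) (Fin n) ℝ) (B : ℝ → Matrix (Fin n) (Fin m) ℝ)
    (C : ℝ → Matrix (Fin n) (Fin n) ℝ) (D : ℝ → Matrix (Fin n) (Fin m) ℝ)
    (Q : ℝ → Matrix (Fin n) (Fin n) ℝ) (S : ℝ → Matrix (Fin m) (Fin n) ℝ)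
    (R : ℝ → Matrix (Fin m) (Fin m) ℝ) (G : Matrix (Fin n) (Fin n) ℝ)
    -- A ∈ L¹(t,T;ℝ^{n×n})
    (hAmeas : AEStronglyMeasurable A (volume.restrict (Set.Icc t T)))
    (hA : IntegrableOn (fun s => ‖A s‖) (Set.Icc t T))
    -- B ∈ L²(t,T;ℝ^{n×m})
    (hBmeas : AEStronglyMeasurable B (volume.restrict (Set.Icc t T)))
    (hB : IntegrableOn (fun s => ‖B s‖ ^ 2) (Set.Icc t T))
    -- C ∈ L²(t,T;ℝ^{n×n})
    (hCmeas : AEStronglyMeasurable C (volume.restrict (Set.Icc t T)))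
    (hC : IntegrableOn (fun s => ‖C s‖ ^ 2) (Set.Icc t T))
    -- D ∈ L^∞(t,T;ℝ^{n×m})
    (hDmeas : AEStronglyMeasurable D (volume.restrict (Set.Icc t T)))
    (hD : ∃ K : ℝ, ∀ᵐ s ∂volume.restrict (Set.Icc t T), ‖D s‖ ≤ K)
    -- Q ∈ L¹(t,T;𝕊ⁿ)
    (hQmeas : AEStronglyMeasurable Q (volume.restrict (Set.Icc t T)))
    (hQ : IntegrableOn (fun s => ‖Q s‖) (Set.Icc t T))
    (hQsymm : ∀ᵐ s ∂volume.restrict (Set.Icc t T), (Q s)ᵀ = Q s)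
    -- S ∈ L²(t,T;ℝ^{m×n})
    (hSmeas : AEStronglyMeasurable S (volume.restrict (Set.Icc t T)))
    (hS : IntegrableOn (fun s => ‖S s‖ ^ 2) (Set.Icc t T))
    -- R ∈ L^∞(t,T;𝕊ᵐ)
    (hRmeas : AEStronglyMeasurable R (volume.restrict (Set.Icc t T)))
    (hR : ∃ K : ℝ, ∀ᵐ s ∂volume.restrict (Set.Icc t T), ‖R s‖ ≤ K)
    (hRsymm : ∀ᵐ s ∂volume.restrict (Set.Icc t T), (R s)ᵀ = R s)
    -- G ∈ 𝕊ⁿ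
    (hG : Gᵀ = G)
    -- P continuous with symmetric values
    (P : ℝ → Matrix (Fin n) (Fin n) ℝ) (hPcont : ContinuousOn P (Set.Icc t T))
    (hPsymm : ∀ s ∈ Set.Icc t T, (P s)ᵀ = P s)
    -- R̂† : a measurable pointwise Moore–Penrose pseudoinverse of R̂ = R + DᵀPD
    (Rdag : ℝ → Matrix (Fin m) (Fin m) ℝ)
    (hRdagmeas : AEStronglyMeasurable Rdag (volume.restrict (Set.Icc t T)))
    (hRdag : ∀ᵐ s ∂volume.restrict (Set.Icc t T),
      (R s + (D s)ᵀ * P s * D s) * Rdag s * (R s + (D s)ᵀ * P s * D s)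
          = R s + (D s)ᵀ * P s * D s ∧
        Rdag s * (R s + (D s)ᵀ * P s * D s) * Rdag s = Rdag s ∧
        ((R s + (D s)ᵀ * P s * D s) * Rdag s)ᵀ = (R s + (D s)ᵀ * P s * D s) * Rdag s ∧
        (Rdag s * (R s + (D s)ᵀ * P s * D s))ᵀ = Rdag s * (R s + (D s)ᵀ * P s * D s))
    -- the Riccati integral equation
    (hPeq : ∀ s ∈ Set.Icc t T,
      P s = G + ∫ r in s..T,
        (P r * A r + (A r)ᵀ * P r + (C r)ᵀ * P r * C r + Q r
          - ((B r)ᵀ * P r + (D r)ᵀ * P r * C r + S r)ᵀ * Rdag r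
              * ((B r)ᵀ * P r + (D r)ᵀ * P r * C r + S r)))
    -- the range condition R̂R̂†M = M a.e.
    (hrange : ∀ᵐ s ∂volume.restrict (Set.Icc t T),
      (R s + (D s)ᵀ * P s * D s) * Rdag s
          * ((B s)ᵀ * P s + (D s)ᵀ * P s * C s + S s)
        = (B s)ᵀ * P s + (D s)ᵀ * P s * C s + S s)
    -- R̂†M ∈ L²(t,T;ℝ^{m×n})
    (hL2meas : AEStronglyMeasurable
      (fun s => Rdag s * ((B s)ᵀ * P s + (D s)ᵀ * P s * C s + S s))
      (volume.restrict (Set.Icc t T)))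
    (hL2 : IntegrableOn
      (fun s => ‖Rdag s * ((B s)ᵀ * P s + (D s)ᵀ * P s * C s + S s)‖ ^ 2)
      (Set.Icc t T))
    -- an arbitrary θ ∈ L² and the candidate gain Θ
    (θ : ℝ → Matrix (Fin m) (Fin n) ℝ)
    (hθmeas : AEStronglyMeasurable θ (volume.restrict (Set.Icc t T)))
    (hθ : IntegrableOn (fun s => ‖θ s‖ ^ 2) (Set.Icc t T))
    (Θ : ℝ → Matrix (Fin m) (Fin n) ℝ)
    (hΘdef : ∀ s, Θ s = -(Rdag s * ((B s)ᵀ * P s + (D s)ᵀ * P s * C s + S s))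
      + (1 - Rdag s * (R s + (D s)ᵀ * P s * D s)) * θ s) :
    -- Θ ∈ L²(t,T;ℝ^{m×n})
    (AEStronglyMeasurable Θ (volume.restrict (Set.Icc t T)) ∧
      IntegrableOn (fun s => ‖Θ s‖ ^ 2) (Set.Icc t T)) ∧
    -- the stationarity constraint a.e.
    (∀ᵐ s ∂volume.restrict (Set.Icc t T),
      (B s)ᵀ * P s + (D s)ᵀ * P s * C s + S s
        + (R s + (D s)ᵀ * P s * D s) * Θ s = 0) ∧
    -- the Lyapunov-type linear integral equation
    (∀ s ∈ Set.Icc t T,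
      P s = G + ∫ r in s..T,
        (P r * A r + (A r)ᵀ * P r + (C r)ᵀ * P r * C r
          + (P r * B r + (C r)ᵀ * P r * D r + (S r)ᵀ) * Θ r + Q r)) :=
  regular_riccati_solution_gives_closed_loop_gain_general t T A B C D Q S R G hDmeas hRmeas hRsymm P
    hPcont hPsymm Rdag hRdagmeas hRdag hPeq hrange hL2meas hL2 θ hθmeas hθ Θ hΘdef
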